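/- The map NF given by NF(a) = Σ_{s∈Δ} a_s·NF(s) is well defined on k⟨(Δ,𝔖)⟩ (for every simple term s₀ there are only finitely many s in the support of a with s₀ occurring in NF(s), so the coefficient of each s₀ is a finite sum), maps k⟨(Δ,𝔖)⟩ into itself, and is a linear and continuous map from the topological vector space k⟨(Δ,𝔖)⟩ to itself. -/

import Mathlib

inductive RT : Type
  | var : ℕ → RT
  | lam : ℕ → RT → RT
  | app : RT → List RT → RT

noncomputable instance : DecidableEq RT := Classical.decEq _

namespace Resource

mutual
def size : RT → ℕ
  | .var _ => 1
  | .lam _ s => 1 + size s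
  | .app s S => 1 + size s + sizeP S
def sizeP : List RT → ℕ
  | [] => 0
  | t :: T => size t + sizeP T
end

mutual
def fv : RT → Finset ℕ
  | .var x => {x}
  | .lam x s => (fv s).erase x
  | .app s S => fv s ∪ fvP S
def fvP : List RT → Finset ℕ
  | [] => ∅
  | t :: T => fv t ∪ fvP T
end

mutual
def fc : RT → ℕ → ℕ
  | .var y, x => if y = x then 1 else 0
  | .lam y s, x => if y = x then 0 else fc s x
  | .app s S, x => fc s x + fcP S x
def fcP : List RT → ℕ → ℕ
  | [], _ => 0
  | t :: T, x => fc t x + fcP T x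
end

mutual
def subst : RT → ℕ → RT → RT
  | .var y, x, t => if y = x then t else .var y
  | .lam y s, x, t => if y = x then .lam y s else .lam y (subst s x t)
  | .app s S, x, t => .app (subst s x t) (substP S x t)
def substP : List RT → ℕ → RT → List RT
  | [], _, _ => []
  | u :: T, x, t => subst u x t :: substP T x t
end

def splits : List RT → List (List RT × List RT)
  | [] => [([], [])]
  | a :: l => (splits l).flatMap fun p => [(a :: p.1, p.2), (p.1, a :: p.2)]

mutual
def dsubst : RT → ℕ → List RT → Multiset RT
  | .var y, x, S =>
      if y = x then (match S with | [t] => {t} | _ => 0)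
      else if S.isEmpty then {RT.var y} else 0
  | .lam y s, x, S =>
      if y = x then (if S.isEmpty then {RT.lam y s} else 0)
      else (dsubst s x S).map (RT.lam y)
  | .app s T, x, S =>
      ((splits S).map fun p =>
        (dsubst s x p.1).bind fun s' =>
          (dsubstP T x p.2).map fun T' => RT.app s' T').sum
def dsubstP : List RT → ℕ → List RT → Multiset (List RT)
  | [], _, S => if S.isEmpty then {([] : List RT)} else 0
  | t :: T, x, S =>
      ((splits S).map fun p =>
        (dsubst t x p.1).bind fun t' =>
          (dsubstP T x p.2).map fun T' => t' :: T').sum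
end

mutual
inductive Red1 : RT → Multiset RT → Prop
  | beta (x : ℕ) (s : RT) (S : List RT) : Red1 (.app (.lam x s) S) (dsubst s x S)
  | lam (x : ℕ) {s : RT} {a : Multiset RT} : Red1 s a → Red1 (.lam x s) (a.map (RT.lam x))
  | appL {s : RT} {a : Multiset RT} (S : List RT) :
      Red1 s a → Red1 (.app s S) (a.map fun u => RT.app u S)
  | appR (s : RT) {S : List RT} {A : Multiset (List RT)} :
      Red1P S A → Red1 (.app s S) (A.map fun T => RT.app s T)
inductive Red1P : List RT → Multiset (List RT) → Prop
  | head {t : RT} {b : Multiset RT} (T : List RT) :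
      Red1 t b → Red1P (t :: T) (b.map fun u => u :: T)
  | tail (t : RT) {T : List RT} {B : Multiset (List RT)} :
      Red1P T B → Red1P (t :: T) (B.map fun T' => t :: T')
end

def NLift {α β : Type*} (ρ : α → Multiset β → Prop) (a : Multiset α) (b : Multiset β) : Prop :=
  ∃ l : List (α × Multiset β), (∀ p ∈ l, ρ p.1 p.2) ∧
    a = (l.map Prod.fst : List α) ∧ b = (l.map Prod.snd).sum

def Red1R (s : RT) (b : Multiset RT) : Prop := b = {s} ∨ Red1 s b

def Red : Multiset RT → Multiset RT → Prop := Relation.TransGen (NLift Red1R)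

def rle (t s : RT) : Prop := ∃ a, Red {s} a ∧ t ∈ a

def above (s : RT) : Set RT := {t | rle s t}

def Red1RP (S : List RT) (B : Multiset (List RT)) : Prop := B = {S} ∨ Red1P S B

def RedP : Multiset (List RT) → Multiset (List RT) → Prop := Relation.TransGen (NLift Red1RP)

def plep (T S : List RT) : Prop := ∃ A, RedP {S} A ∧ T ∈ A





def orth {I : Type*} (F : Set (Set I)) : Set (Set I) := {e' | ∀ e ∈ F, (e ∩ e').Finite}

structure FinSpace (I : Type*) where
  F : Set (Set I)
  biorth : orth (orth F) ⊆ F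

lemma subset_biorth {I : Type*} (G : Set (Set I)) : G ⊆ orth (orth G) := by
  intro e he g hg
  have := hg e he
  rwa [Set.inter_comm] at this

lemma orth_anti {I : Type*} {G H : Set (Set I)} (h : G ⊆ H) : orth H ⊆ orth G :=
  fun g hg e he => hg e (h he)

def FinSpace.ofOrth {I : Type*} (G : Set (Set I)) : FinSpace I :=
  ⟨orth G, orth_anti (subset_biorth G)⟩

lemma FinSpace.empty_mem {I : Type*} (X : FinSpace I) : ∅ ∈ X.F :=
  X.biorth (fun g _ => by simp)

lemma FinSpace.mem_of_subset {I : Type*} (X : FinSpace I) {e f : Set I}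
    (he : e ∈ X.F) (h : f ⊆ e) : f ∈ X.F := by
  refine X.biorth (fun g hg => ?_)
  exact ((hg e he).subset (fun x hx => ⟨h hx.2, hx.1⟩))

lemma FinSpace.union_mem {I : Type*} (X : FinSpace I) {e f : Set I}
    (he : e ∈ X.F) (hf : f ∈ X.F) : e ∪ f ∈ X.F := by
  refine X.biorth (fun g hg => ?_)
  have h1 := hg e he
  have h2 := hg f hf
  rw [Set.inter_comm] at h1 h2
  rw [Set.inter_union_distrib_left]
  exact h1.union h2

def fsSub (k : Type*) [Field k] {I : Type*} (X : FinSpace I) : Submodule k (I → k) where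
  carrier := {a | {s | a s ≠ 0} ∈ X.F}
  add_mem' := by
    intro a b ha hb
    refine X.mem_of_subset (X.union_mem ha hb) ?_
    intro s hs
    by_contra h
    simp only [Set.mem_union, Set.mem_setOf_eq, not_or, not_not] at h
    exact hs (by simp [Pi.add_apply, h.1, h.2])
  zero_mem' := by
    refine X.mem_of_subset X.empty_mem ?_
    intro s hs
    simp at hs
  smul_mem' := by
    intro c a ha
    refine X.mem_of_subset ha ?_
    intro s hs
    by_contra h
    simp only [Set.mem_setOf_eq, not_not] at h
    exact hs (by simp [Pi.smul_apply, h])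

def fsTop (k : Type*) [Field k] {I : Type*} (X : FinSpace I) :
    TopologicalSpace (fsSub k X) where
  IsOpen U := ∀ a ∈ U, ∃ e' ∈ orth X.F, ∀ b : fsSub k X, (∀ s ∈ e', b.1 s = a.1 s) → b ∈ U
  isOpen_univ := by
    intro a _
    exact ⟨∅, fun e _ => by simp, fun b _ => trivial⟩
  isOpen_inter := by
    rintro U V hU hV a ⟨haU, haV⟩
    obtain ⟨e₁, he₁, h₁⟩ := hU a haU
    obtain ⟨e₂, he₂, h₂⟩ := hV a haV
    refine ⟨e₁ ∪ e₂, fun e he => ?_, fun b hb => ?_⟩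
    · rw [Set.inter_union_distrib_left]
      exact (he₁ e he).union (he₂ e he)
    · exact ⟨h₁ b (fun s hs => hb s (Or.inl hs)), h₂ b (fun s hs => hb s (Or.inr hs))⟩
  isOpen_sUnion := by
    rintro 𝒮 h a ⟨U, hU, haU⟩
    obtain ⟨e', he', hb⟩ := h U hU a haU
    exact ⟨e', he', fun b hbs => ⟨U, hU, hb b hbs⟩⟩



def Sfin : Set (Set RT) := orth (Set.range above)

def SfinSpace : FinSpace RT := FinSpace.ofOrth (Set.range above)

def SS : Set (Set RT) := {e' | ∀ ξ : Finset ℕ, {s ∈ e' | fv s ⊆ ξ}.Finite}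

def Sfv : Set (Set RT) := orth (Set.range above ∪ SS)

def bang (e : Set RT) : Set (List RT) := {S | ∀ t ∈ S, t ∈ e}

def appSet (g : Set RT) (E : Set (List RT)) : Set RT :=
  {u | ∃ t ∈ g, ∃ S ∈ E, u = RT.app t S}

def lamSet (x : ℕ) (g : Set RT) : Set RT := {u | ∃ s ∈ g, u = RT.lam x s}

def appMany (g : Set RT) (Es : List (Set (List RT))) : Set RT := Es.foldl appSet g

def dsubstSet (g : Set RT) (x : ℕ) (E : Set (List RT)) : Set RT :=
  {t | ∃ s ∈ g, ∃ S ∈ E, t ∈ dsubst s x S}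

def IsDFS (W : Set RT) (F : Set (Set RT)) : Prop :=
  (∀ e ∈ F, e ⊆ W) ∧ ∀ e : Set RT, e ⊆ W → e ∈ orth (orth F) → e ∈ F

def SaturatedP (W : Set RT) (F : Set (Set RT)) : Prop :=
  (∀ (x : ℕ) (es : List (Set RT)), (∀ e ∈ es, e ∈ Sfv) →
      appMany {RT.var x} (es.map bang) ∈ F) ∧
  F ⊆ Sfv ∧
  (∀ (x : ℕ) (g e : Set RT) (es : List (Set RT)), g ∈ Sfv → e ∈ Sfv →
      (∀ e' ∈ es, e' ∈ Sfv) →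
      appMany (dsubstSet g x (bang e)) (es.map bang) ∈ F →
      appMany (appSet (lamSet x g) (bang e)) (es.map bang) ∈ F)

abbrev FP := Set RT × Set (Set RT)

def SatFP (X : FP) : Prop := IsDFS X.1 X.2 ∧ SaturatedP X.1 X.2

def implWeb (FX FY : Set (Set RT)) : Set RT :=
  {t | ∀ e ∈ FX, appSet {t} (bang e) ∈ FY}

def implF (FX FY : Set (Set RT)) : Set (Set RT) :=
  {g | g ⊆ implWeb FX FY ∧ ∀ e ∈ FX, appSet g (bang e) ∈ FY}

def implFP (X Y : FP) : FP := (implWeb X.2 Y.2, implF X.2 Y.2)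

def preimpl (e : Set RT) (f' : Set RT) : Set RT :=
  {t | (appSet {t} (bang e) ∩ f').Nonempty}

def pdsubstSet (f : Set RT) (l : List (ℕ × Set (List RT))) : Set RT :=
  l.foldl (fun g p => dsubstSet g p.1 p.2) f

inductive ALam (k : Type) : Type
  | var : ℕ → ALam k
  | lam : ℕ → ALam k → ALam k
  | app : ALam k → List (k × ALam k) → ALam k

variable {k : Type} [Field k]

mutual
def taylor : ALam k → RT → k
  | .var x, .var y => if x = y then 1 else 0
  | .var _, _ => 0
  | .lam x M, .lam y s => if x = y then taylor M s else 0
  | .lam _ _, _ => 0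
  | .app M Q, .app t T =>
      taylor M t * ((Nat.factorial T.length : ℕ) : k)⁻¹ * (T.map fun u => taylorQ Q u).prod
  | .app _ _, _ => 0
def taylorQ : List (k × ALam k) → RT → k
  | [], _ => 0
  | (α, N) :: Q, u => α * taylor N u + taylorQ Q u
end

mutual
inductive InShape : ALam k → RT → Prop
  | var (x : ℕ) : InShape (.var x) (.var x)
  | lam (x : ℕ) {M : ALam k} {s : RT} : InShape M s → InShape (.lam x M) (.lam x s)
  | app {M : ALam k} {Q : List (k × ALam k)} {s : RT} {T : List RT} :
      InShape M s → (∀ u ∈ T, InShapeQ Q u) →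
      InShape (.app M Q) (.app s T)
inductive InShapeQ : List (k × ALam k) → RT → Prop
  | head {α : k} {N : ALam k} (Q : List (k × ALam k)) {u : RT} :
      InShape N u → InShapeQ ((α, N) :: Q) u
  | tail (p : k × ALam k) {Q : List (k × ALam k)} {u : RT} :
      InShapeQ Q u → InShapeQ (p :: Q) u
end

inductive Ty : Type
  | var : ℕ → Ty
  | arrow : Ty → Ty → Ty
  | all : ℕ → Ty → Ty

def tyFV : Ty → Finset ℕ
  | .var φ => {φ}
  | .arrow A B => tyFV A ∪ tyFV B
  | .all φ A => (tyFV A).erase φ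

def substTy : Ty → ℕ → Ty → Ty
  | .var ψ, φ, B => if ψ = φ then B else .var ψ
  | .arrow A C, φ, B => .arrow (substTy A φ B) (substTy C φ B)
  | .all ψ A, φ, B => if ψ = φ then .all ψ A else .all ψ (substTy A φ B)

inductive HasTy : List (ℕ × Ty) → ALam k → Ty → Prop
  | var (Γ : List (ℕ × Ty)) (x : ℕ) (A : Ty) :
      List.lookup x Γ = some A → HasTy Γ (.var x) A
  | abs {Γ : List (ℕ × Ty)} {x : ℕ} {M : ALam k} {A B : Ty} :
      HasTy ((x, A) :: Γ) M B → HasTy Γ (.lam x M) (.arrow A B)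
  | app {Γ : List (ℕ × Ty)} {M : ALam k} {Q : List (k × ALam k)} {A B : Ty} :
      HasTy Γ M (.arrow A B) → (∀ p ∈ Q, HasTy Γ p.2 A) → HasTy Γ (.app M Q) B
  | inst {Γ : List (ℕ × Ty)} {M : ALam k} {φ : ℕ} {A : Ty} (B : Ty) :
      HasTy Γ M (.all φ A) → HasTy Γ M (substTy A φ B)
  | gen {Γ : List (ℕ × Ty)} {M : ALam k} {φ : ℕ} {A : Ty} :
      HasTy Γ M A → (∀ p ∈ Γ, φ ∉ tyFV p.2) → HasTy Γ M (.all φ A)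



def interp (I : ℕ → FP) : Ty → FP
  | .var φ => I φ
  | .arrow A B => implFP (interp I A) (interp I B)
  | .all φ A =>
      (⋂ (X : FP) (_ : SatFP X), (interp (Function.update I φ X) A).1,
       {e | (e ⊆ ⋂ (X : FP) (_ : SatFP X), (interp (Function.update I φ X) A).1) ∧
            ∀ X : FP, SatFP X → e ∈ (interp (Function.update I φ X) A).2})

/-!
Every term of `NF(s)` is reachable from `s`, so `s ∈ ↑s₀` whenever `s₀` occurs in `NF(s)`, and
the cones `↑s` are nested along reduction. Hence the relation `s₀ ∈ NF(s)` sends `𝔖`-finitary sets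
to `𝔖`-finitary sets and pulls `𝔖^⊥`-sets back to `𝔖^⊥`-sets. For any matrix with these two
properties, `a ↦ (s₀ ↦ Σ_s a_s M_{s s₀})` is a finite sum at each `s₀`, lands in `k⟨X⟩`, and is
linear and continuous: the coefficients of the image on `e'` only read `a` on the pullback of `e'`.
-/

lemma NLift.refl {α : Type*} {ρ : α → Multiset α → Prop} (hρ : ∀ a, ρ a {a}) (A : Multiset α) :
    NLift ρ A A := by
  refine ⟨A.toList.map fun a => (a, {a}), by simp [hρ], ?_, ?_⟩ <;> simp [Function.comp_def]

lemma NLift.add {α β : Type*} {ρ : α → Multiset β → Prop} {A C : Multiset α}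
    {B D : Multiset β} (hAB : NLift ρ A B) (hCD : NLift ρ C D) : NLift ρ (A + C) (B + D) := by
  obtain ⟨l, hl, rfl, rfl⟩ := hAB
  obtain ⟨l', hl', rfl, rfl⟩ := hCD
  refine ⟨l ++ l', fun p hp => (List.mem_append.mp hp).elim (hl p) (hl' p), ?_, ?_⟩ <;> simp

lemma Red.add_right {A B : Multiset RT} (h : Red A B) (C : Multiset RT) : Red (A + C) (B + C) := by
  have hC : NLift Red1R C C := NLift.refl (fun _ => Or.inl rfl) C
  induction h with
  | single h => exact .single (h.add hC)
  | tail _ h ih => exact ih.tail (h.add hC)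

lemma rle_trans {t u s : RT} (htu : rle t u) (hus : rle u s) : rle t s := by
  obtain ⟨a, hua, hta⟩ := htu
  obtain ⟨b, hsb, hub⟩ := hus
  have hba : Red b (a + b.erase u) := by
    simpa [Multiset.singleton_add, Multiset.cons_erase hub] using hua.add_right (b.erase u)
  exact ⟨a + b.erase u, hsb.trans hba, Multiset.mem_add.mpr (Or.inl hta)⟩

lemma above_subset_above {s t : RT} (h : t ∈ above s) : above t ⊆ above s :=
  fun _ hu => rle_trans h hu

lemma mem_above_of_red {s t : RT} {a : Multiset RT} (h : Red {s} a) (ht : t ∈ a) :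
    s ∈ above t :=
  ⟨a, h, ht⟩

section FinitenessSpaces

variable {I : Type*}

lemma mem_orth_of_subset {G : Set (Set I)} {e f : Set I} (he : e ∈ orth G) (hfe : f ⊆ e) :
    f ∈ orth G :=
  fun g hg => (he g hg).subset (Set.inter_subset_inter_right g hfe)

lemma singleton_mem_orth (G : Set (Set I)) (i : I) : {i} ∈ orth G :=
  fun _ _ => (Set.finite_singleton i).subset Set.inter_subset_right

lemma mem_orth_range_iff {U : I → Set I} {e : Set I} :
    e ∈ orth (Set.range U) ↔ ∀ i, (U i ∩ e).Finite :=
  Set.forall_mem_range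

/-- `U i` plays the role of the upper cone `↑i` of a preorder, and `N` of a relation that only
goes downwards (`j ∈ N i → i ∈ ↑j`) with finite images. -/
lemma biUnion_mem_orth_range {U : I → Set I} (hU : ∀ {i j}, j ∈ U i → U j ⊆ U i)
    {N : I → Set I} (hN : ∀ i, (N i).Finite) (hNU : ∀ i, ∀ j ∈ N i, i ∈ U j)
    {e : Set I} (he : e ∈ orth (Set.range U)) : (⋃ i ∈ e, N i) ∈ orth (Set.range U) := by
  rw [mem_orth_range_iff] at he ⊢
  intro t
  refine ((he t).biUnion fun i _ => hN i).subset ?_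
  rintro j ⟨hjt, hj⟩
  obtain ⟨i, hie, hji⟩ := Set.mem_iUnion₂.mp hj
  exact Set.mem_biUnion ⟨hU hjt (hNU i j hji), hie⟩ hji

lemma setOf_exists_mem_orth_orth_range {U : I → Set I} (hU : ∀ {i j}, j ∈ U i → U j ⊆ U i)
    {N : I → Set I} (hN : ∀ i, (N i).Finite) (hNU : ∀ i, ∀ j ∈ N i, i ∈ U j)
    {e' : Set I} (he' : e' ∈ orth (orth (Set.range U))) :
    {i | ∃ j ∈ e', j ∈ N i} ∈ orth (orth (Set.range U)) := by
  intro e he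
  have himage := he' _ (biUnion_mem_orth_range hU hN hNU he)
  refine (himage.biUnion fun j _ => mem_orth_range_iff.mp he j).subset ?_
  rintro i ⟨hie, j, hje', hji⟩
  exact Set.mem_biUnion ⟨Set.mem_biUnion hie hji, hje'⟩ ⟨hNU i j hji, hie⟩

end FinitenessSpaces

section FinitaryMatrix

open Topology

variable {I : Type*} {K : Type*} [Field K] {X : FinSpace I} {M : I → I → K}

noncomputable def finsumVecMul (a : I → K) (M : I → I → K) (j : I) : K := ∑ᶠ i, a i * M i j

/-- The finitary relations of the theory of finiteness spaces, given by the support of `M`. -/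
structure IsFinitaryMatrix (X : FinSpace I) (M : I → I → K) : Prop where
  image_mem : ∀ e ∈ X.F, {j | ∃ i ∈ e, M i j ≠ 0} ∈ X.F
  preimage_mem : ∀ e' ∈ orth X.F, {i | ∃ j ∈ e', M i j ≠ 0} ∈ orth X.F

namespace IsFinitaryMatrix

variable (hM : IsFinitaryMatrix X M)
include hM

lemma finite_support_mul (a : fsSub K X) (j : I) :
    (Function.support fun i => a.1 i * M i j).Finite := by
  have hcol := hM.preimage_mem {j} (singleton_mem_orth _ j) _ a.2
  exact hcol.subset fun i hi => ⟨left_ne_zero_of_mul hi, j, rfl, right_ne_zero_of_mul hi⟩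

lemma finsumVecMul_mem (a : fsSub K X) : finsumVecMul a.1 M ∈ fsSub K X := by
  refine X.mem_of_subset (hM.image_mem _ a.2) fun j hj => ?_
  by_contra hj'
  refine hj (finsum_eq_zero_of_forall_eq_zero fun i => ?_)
  by_cases hi : a.1 i = 0
  · rw [hi, zero_mul]
  · rw [not_not.mp fun hij => hj' ⟨i, hi, hij⟩, mul_zero]

noncomputable def linearMap : fsSub K X →ₗ[K] fsSub K X where
  toFun a := ⟨finsumVecMul a.1 M, hM.finsumVecMul_mem a⟩
  map_add' a b := by
    ext j
    simpa only [Submodule.coe_add, Pi.add_apply, finsumVecMul, add_mul] using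
      finsum_add_distrib (hM.finite_support_mul a j) (hM.finite_support_mul b j)
  map_smul' c a := by
    ext j
    simpa only [Submodule.coe_smul, Pi.smul_apply, smul_eq_mul, RingHom.id_apply, finsumVecMul,
      mul_assoc] using (mul_finsum _ c).symm

lemma linearMap_apply (a : fsSub K X) (j : I) :
    (hM.linearMap a).1 j = ∑ᶠ i, a.1 i * M i j :=
  rfl

lemma continuous_linearMap : Continuous[fsTop K X, fsTop K X] hM.linearMap := by
  rw [continuous_def]
  intro V hV a haV
  obtain ⟨e', he', hV'⟩ := hV _ haV
  refine ⟨_, hM.preimage_mem e' he', fun b hba => hV' _ fun j hj => ?_⟩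
  refine finsum_congr fun i => ?_
  by_cases hij : M i j = 0
  · simp [hij]
  · rw [hba i ⟨j, hj, hij⟩]

end IsFinitaryMatrix

end FinitaryMatrix

lemma isFinitaryMatrix_count_nf {K : Type*} [Field K] {NF0 : RT → Multiset RT}
    (hred : ∀ s, Red {s} (NF0 s)) :
    IsFinitaryMatrix SfinSpace fun s s₀ => (Multiset.count s₀ (NF0 s) : K) := by
  have hN : ∀ s, {s₀ | s₀ ∈ NF0 s}.Finite := fun s => (NF0 s).finite_toSet
  have hNU : ∀ s, ∀ s₀ ∈ {s₀ | s₀ ∈ NF0 s}, s ∈ above s₀ :=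
    fun s _ hs₀ => mem_above_of_red (hred s) hs₀
  have hmem : ∀ {s s₀}, (Multiset.count s₀ (NF0 s) : K) ≠ 0 → s₀ ∈ NF0 s :=
    fun h => Multiset.count_ne_zero.mp fun h0 => h (by rw [h0, Nat.cast_zero])
  constructor
  · intro e he
    refine SfinSpace.mem_of_subset (biUnion_mem_orth_range above_subset_above hN hNU he) ?_
    rintro s₀ ⟨s, hs, h⟩
    exact Set.mem_biUnion hs (hmem h)
  · intro e' he'
    refine mem_orth_of_subset (setOf_exists_mem_orth_orth_range above_subset_above hN hNU he') ?_
    rintro s ⟨s₀, hs₀, h⟩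
    exact ⟨s₀, hs₀, hmem h⟩

theorem statement9 (k : Type*) [Field k] (NF0 : RT → Multiset RT)
    (hred : ∀ s : RT, Red {s} (NF0 s))
    (hnorm : ∀ s : RT, ∀ t ∈ NF0 s, ¬ ∃ b, Red1 t b) :
    letI : TopologicalSpace (fsSub k SfinSpace) := fsTop k SfinSpace
    (∀ a : fsSub k SfinSpace, ∀ s₀ : RT, {s : RT | a.1 s ≠ 0 ∧ s₀ ∈ NF0 s}.Finite) ∧
    ∃ L : fsSub k SfinSpace →ₗ[k] fsSub k SfinSpace,
      Continuous (fun a => L a) ∧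
      ∀ (a : fsSub k SfinSpace) (s₀ : RT),
        (L a).1 s₀ = ∑ᶠ s : RT, a.1 s * (Multiset.count s₀ (NF0 s) : k) := by
  have hM : IsFinitaryMatrix SfinSpace fun s s₀ => (Multiset.count s₀ (NF0 s) : k) :=
    isFinitaryMatrix_count_nf hred
  refine ⟨fun a s₀ => ?_, hM.linearMap, hM.continuous_linearMap, hM.linearMap_apply⟩
  refine (mem_orth_range_iff.mp a.2 s₀).subset ?_
  rintro s ⟨hs, hs₀⟩
  exact ⟨mem_above_of_red (hred s) hs₀, hs⟩

end Resource
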